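/- Suppose m, p, ε satisfy Condition 1, and there are n ≥ 2 forecasters with reports r_1, …, r_n ∈ [0,1]^m such that forecaster i's report r_i is ε-ℓ² approximately truthful with respect to p̄ and, for each j ≠ i, r_j is ε-ℓ² approximately truthful with respect to c. Then for every outcome vector y ∈ {0,1}^m, U_i(r_i; r_{−i}, y) ≤ U_i(r*; r_{−i}, y). -/

import Mathlib

open scoped Classical

noncomputable section

/-- The Euclidean (ℓ²) norm of a vector in ℝ^m. -/
def l2norm {m : ℕ} (v : Fin m → ℝ) : ℝ := Real.sqrt (∑ t, v t ^ 2)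

/-- The hedged probability `p* = (1/2 + p)/2`. -/
def pstar (p : ℝ) : ℝ := (1 / 2 + p) / 2

/-- Condition 1 of the paper on `(m, p, ε)`. -/
def Cond1 (m : ℕ) (p ε : ℝ) : Prop :=
  21 ≤ m ∧
  (0 < p ∧ p < 1 / 2 - 2 * Real.sqrt ((2 / Real.sqrt m) * (1 - 2 / Real.sqrt m))) ∧
  (0 < ε ∧ ε < 1 / 2 - Real.sqrt (pstar p * (1 - pstar p)) - 2 / Real.sqrt m)

/-- A report vector `r` is ε-ℓ² approximately truthful w.r.t. the belief vector `q`
if `(1/√m) ‖r − q‖₂ ≤ ε`. -/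
def ApproxTruthful {m : ℕ} (ε : ℝ) (r q : Fin m → ℝ) : Prop :=
  (1 / Real.sqrt m) * l2norm (fun t => r t - q t) ≤ ε

/-- The winning set of the Simple Max mechanism with the quadratic score: the set of
forecasters whose report is closest in Euclidean distance to the outcome vector `y`. -/
def winner {n m : ℕ} (r : Fin n → Fin m → ℝ) (y : Fin m → ℝ) : Finset (Fin n) :=
  Finset.univ.filter fun k => ∀ l : Fin n,
    l2norm (fun t => r k t - y t) ≤ l2norm (fun t => r l t - y t)

/-- The Simple Max utility of forecaster `i`: `1/|winner|` if `i` is in the winning set,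
and `0` otherwise (ties are split uniformly). -/
def utility {n m : ℕ} (i : Fin n) (r : Fin n → Fin m → ℝ) (y : Fin m → ℝ) : ℝ :=
  (if i ∈ winner r y then (1 : ℝ) else 0) / (winner r y).card

lemma l2norm_nonneg {m : ℕ} (v : Fin m → ℝ) : 0 ≤ l2norm v := Real.sqrt_nonneg _

lemma l2norm_sq {m : ℕ} (v : Fin m → ℝ) : l2norm v ^ 2 = ∑ t, v t ^ 2 :=
  Real.sq_sqrt (Finset.sum_nonneg fun t _ => sq_nonneg _)

lemma l2norm_sub_comm {m : ℕ} (u v : Fin m → ℝ) :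
    l2norm (fun t => u t - v t) = l2norm (fun t => v t - u t) := by
  unfold l2norm
  congr 1
  exact Finset.sum_congr rfl fun t _ => by ring

lemma l2norm_eq_norm {m : ℕ} (v : Fin m → ℝ) :
    l2norm v = ‖(WithLp.equiv 2 (Fin m → ℝ)).symm v‖ := by
  rw [EuclideanSpace.norm_eq]
  unfold l2norm
  congr 1
  refine Finset.sum_congr rfl fun t _ => ?_
  rw [Real.norm_eq_abs, sq_abs]; rfl

lemma l2_triangle {m : ℕ} (u v w : Fin m → ℝ) :
    l2norm (fun t => u t - w t) ≤ l2norm (fun t => u t - v t) + l2norm (fun t => v t - w t) := by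
  have h := dist_triangle ((WithLp.equiv 2 (Fin m → ℝ)).symm u)
      ((WithLp.equiv 2 (Fin m → ℝ)).symm v) ((WithLp.equiv 2 (Fin m → ℝ)).symm w)
  simp only [dist_eq_norm] at h
  have e1 : (WithLp.equiv 2 (Fin m → ℝ)).symm u - (WithLp.equiv 2 (Fin m → ℝ)).symm w
      = (WithLp.equiv 2 (Fin m → ℝ)).symm (fun t => u t - w t) := rfl
  have e2 : (WithLp.equiv 2 (Fin m → ℝ)).symm u - (WithLp.equiv 2 (Fin m → ℝ)).symm v
      = (WithLp.equiv 2 (Fin m → ℝ)).symm (fun t => u t - v t) := rfl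
  have e3 : (WithLp.equiv 2 (Fin m → ℝ)).symm v - (WithLp.equiv 2 (Fin m → ℝ)).symm w
      = (WithLp.equiv 2 (Fin m → ℝ)).symm (fun t => v t - w t) := rfl
  rw [e1, e2, e3] at h
  rw [l2norm_eq_norm, l2norm_eq_norm, l2norm_eq_norm]
  exact h


/-- Pure-arithmetic core of the dominance argument. -/
lemma hedge_arith (mR M ε q Ds Dp Dl : ℝ)
    (hM0 : 0 < M) (hM2 : M ^ 2 = mR) (hmpos : 0 < mR)
    (hε0 : 0 < ε) (hε14 : ε < 1 / 4)
    (hcrux : q + ε - ε ^ 2 < 1 / 4)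
    (hDp0 : 0 ≤ Dp) (hDl0 : 0 ≤ Dl)
    (hid : Ds ^ 2 = Dp ^ 2 / 2 + mR * (q - 1 / 8))
    (hDpDl : Dp ≤ Dl + ε * M)
    (hDllow : M / 2 - ε * M ≤ Dl) :
    Ds < Dl := by
  have hDp2 : Dp ^ 2 ≤ (Dl + ε * M) ^ 2 := by nlinarith
  have f1 : 0 ≤ Dl - (M / 2 - ε * M) := by linarith
  have f2 : 0 ≤ Dl + (M / 2 - ε * M) - 2 * (ε * M) := by
    nlinarith [mul_pos hM0 (show (0:ℝ) < 1 - 4 * ε by linarith)]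
  have hsq : Ds ^ 2 < Dl ^ 2 := by
    nlinarith [mul_nonneg f1 f2, mul_pos hmpos (show (0:ℝ) < 1/4 - q - ε + ε^2 by linarith)]
  exact lt_of_pow_lt_pow_left₀ 2 hDl0 hsq

/-- **Lemma 3 (dominance).** -/
theorem hedging_dominance (m n : ℕ) (p ε : ℝ) (hcond : Cond1 m p ε) (hn : 2 ≤ n)
    (i : Fin n) (r : Fin n → Fin m → ℝ)
    (hrange : ∀ j t, r j t ∈ Set.Icc (0 : ℝ) 1)
    (hi : ApproxTruthful ε (r i) (fun _ => p))
    (hj : ∀ j, j ≠ i → ApproxTruthful ε (r j) (fun _ => 1 / 2))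
    (y : Fin m → ℝ) (hy : ∀ t, y t = 0 ∨ y t = 1) :
    utility i r y ≤ utility i (Function.update r i fun _ => pstar p) y := by
  classical
  obtain ⟨hm21, ⟨hp0, hp1⟩, hε0, hε1⟩ := hcond
  by_cases hiw : i ∈ winner r y
  case neg =>
    have h0 : utility i r y = 0 := by simp [utility, hiw]
    rw [h0]
    unfold utility
    apply div_nonneg
    · split_ifs <;> norm_num
    · positivity
  case pos =>
  -- basic numeric facts
  have hmR : (21 : ℝ) ≤ m := by exact_mod_cast hm21
  have hmpos : (0 : ℝ) < m := by linarith
  have hM0 : 0 < Real.sqrt m := Real.sqrt_pos.mpr hmpos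
  have hM2 : Real.sqrt m ^ 2 = m := Real.sq_sqrt hmpos.le
  have hM4 : 4 < Real.sqrt m := by
    rw [show (4:ℝ) = Real.sqrt 16 by
      rw [show (16:ℝ) = 4 ^ 2 by norm_num, Real.sqrt_sq (by norm_num : (0:ℝ) ≤ 4)]]
    exact Real.sqrt_lt_sqrt (by norm_num) (by linarith)
  have hp12 : p < 1 / 2 := by
    have := Real.sqrt_nonneg ((2 / Real.sqrt m) * (1 - 2 / Real.sqrt m))
    linarith
  have hpsl : 1 / 4 < pstar p := by unfold pstar; linarith
  have hpsu : pstar p < 1 / 2 := by unfold pstar; linarith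
  have hq0 : 0 < pstar p * (1 - pstar p) := by nlinarith
  have hq18 : 1 / 8 < pstar p * (1 - pstar p) := by nlinarith
  set s := Real.sqrt (pstar p * (1 - pstar p)) with hsdef
  have hs0 : 0 ≤ s := Real.sqrt_nonneg _
  have hs2 : s ^ 2 = pstar p * (1 - pstar p) := Real.sq_sqrt hq0.le
  have ha0 : 0 < 2 / Real.sqrt m := by positivity
  have ha12 : 2 / Real.sqrt m < 1 / 2 := by
    rw [div_lt_iff₀ hM0]; linarith
  have hε14 : ε < 1 / 4 := by nlinarith [hε1, hs0, hs2, ha0, hq18]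
  -- crux:  pstar(1-pstar) + ε - ε² < 1/4
  have hcrux : pstar p * (1 - pstar p) + ε - ε ^ 2 < 1 / 4 := by
    have h1 : 0 < 1 / 2 - ε - 2 / Real.sqrt m - s := by linarith
    have h2 : 0 < 1 / 2 - ε - 2 / Real.sqrt m + s := by linarith
    have h3 : 0 < 1 - 2 * ε - 2 / Real.sqrt m := by linarith
    nlinarith [mul_pos h1 h2, mul_pos ha0 h3, hs2]
  -- distances
  have hmem : ∀ l : Fin n,
      l2norm (fun t => r i t - y t) ≤ l2norm (fun t => r l t - y t) :=
    (Finset.mem_filter.mp hiw).2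
  -- the ℓ²-distance from c = (1/2,…,1/2) to y is √m/2
  have hDc : l2norm (fun t => (1:ℝ) / 2 - y t) = Real.sqrt m / 2 := by
    unfold l2norm
    have hsum : ∑ t, ((1:ℝ) / 2 - y t) ^ 2 = (m : ℝ) / 4 := by
      rw [Finset.sum_congr rfl (fun t _ => show ((1:ℝ)/2 - y t)^2 = 1/4 by
        rcases hy t with h | h <;> rw [h] <;> norm_num)]
      rw [Finset.sum_const, Finset.card_univ, Fintype.card_fin, nsmul_eq_mul]
      ring
    rw [hsum, show (m:ℝ)/4 = (Real.sqrt m / 2)^2 by rw [div_pow, hM2]; ring,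
      Real.sqrt_sq (by positivity)]
  -- approx truthfulness in unscaled form
  have hri : l2norm (fun t => r i t - p) ≤ ε * Real.sqrt m := by
    have h : (1 / Real.sqrt m) * l2norm (fun t => r i t - p) ≤ ε := hi
    rw [one_div, inv_mul_eq_div] at h
    exact (div_le_iff₀ hM0).mp h
  -- key squared identity: ‖r* − y‖² = ‖p̄ − y‖²/2 + m (p*(1−p*) − 1/8)
  have hid : l2norm (fun t => pstar p - y t) ^ 2
      = l2norm (fun t => p - y t) ^ 2 / 2 + m * (pstar p * (1 - pstar p) - 1 / 8) := by
    rw [l2norm_sq, l2norm_sq]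
    rw [Finset.sum_congr rfl (fun t _ => show (pstar p - y t)^2
        = (p - y t)^2 / 2 + (pstar p * (1 - pstar p) - 1/8) by
      rcases hy t with h | h <;> rw [h] <;> unfold pstar <;> ring)]
    rw [Finset.sum_add_distrib, ← Finset.sum_div, Finset.sum_const, Finset.card_univ,
      Fintype.card_fin, nsmul_eq_mul]
  -- key strict inequality: for every j ≠ i, r* is strictly closer to y than r j
  have key : ∀ l : Fin n, l ≠ i →
      l2norm (fun t => pstar p - y t) < l2norm (fun t => r l t - y t) := by
    intro l hl
    have hrl : l2norm (fun t => r l t - 1 / 2) ≤ ε * Real.sqrt m := by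
      have h : (1 / Real.sqrt m) * l2norm (fun t => r l t - 1 / 2) ≤ ε := hj l hl
      rw [one_div, inv_mul_eq_div] at h
      exact (div_le_iff₀ hM0).mp h
    -- triangle: ‖p̄ − y‖ ≤ ‖p̄ − r i‖ + ‖r i − y‖
    have T1 : l2norm (fun t => p - y t)
        ≤ l2norm (fun t => p - r i t) + l2norm (fun t => r i t - y t) :=
      l2_triangle (fun _ => p) (r i) y
    have T1' : l2norm (fun t => p - r i t) = l2norm (fun t => r i t - p) :=
      l2norm_sub_comm _ _
    -- triangle: ‖c − y‖ ≤ ‖c − r l‖ + ‖r l − y‖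
    have T2 : l2norm (fun t => (1:ℝ) / 2 - y t)
        ≤ l2norm (fun t => (1:ℝ) / 2 - r l t) + l2norm (fun t => r l t - y t) :=
      l2_triangle (fun _ => (1:ℝ) / 2) (r l) y
    have T2' : l2norm (fun t => (1:ℝ) / 2 - r l t) = l2norm (fun t => r l t - 1 / 2) :=
      l2norm_sub_comm _ _
    have hDiDl := hmem l
    have hDl0 : 0 ≤ l2norm (fun t => r l t - y t) := l2norm_nonneg _
    have hDp0 : 0 ≤ l2norm (fun t => p - y t) := l2norm_nonneg _
    -- ‖p̄ − y‖ ≤ ‖r l − y‖ + ε√m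
    have hDpDl : l2norm (fun t => p - y t)
        ≤ l2norm (fun t => r l t - y t) + ε * Real.sqrt m := by
      rw [T1'] at T1; linarith
    -- ‖r l − y‖ ≥ √m/2 − ε√m
    have hDllow : Real.sqrt m / 2 - ε * Real.sqrt m ≤ l2norm (fun t => r l t - y t) := by
      rw [T2', hDc] at T2; linarith
    exact hedge_arith m (Real.sqrt m) ε (pstar p * (1 - pstar p)) _ _ _
      hM0 hM2 hmpos hε0 hε14 hcrux hDp0 hDl0 hid hDpDl hDllow
  -- the new winner set is exactly {i}
  have hw : winner (Function.update r i fun _ => pstar p) y = {i} := by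
    ext k
    simp only [winner, Finset.mem_filter, Finset.mem_univ, true_and, Finset.mem_singleton]
    constructor
    · intro hk
      by_contra hne
      have h1 := hk i
      rw [Function.update_self, Function.update_of_ne hne] at h1
      exact absurd h1 (not_le.mpr (key k hne))
    · intro hk
      intro l'
      rw [hk, Function.update_self]
      by_cases hl' : l' = i
      · subst hl'; rw [Function.update_self]
      · rw [Function.update_of_ne hl']
        exact (key l' hl').le
  have hnew : utility i (Function.update r i fun _ => pstar p) y = 1 := by
    simp [utility, hw]
  rw [hnew]
  have hcard : (1 : ℝ) ≤ (winner r y).card := by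
    have : 0 < (winner r y).card := Finset.card_pos.mpr ⟨i, hiw⟩
    exact_mod_cast this
  unfold utility
  rw [if_pos hiw]
  exact div_le_one_of_le₀ hcard (by positivity)

end
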